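/- arXiv:2308.02200 — 3 statements merged into one kernel-verified Lean document; each statement's English description precedes it below -/
import Mathlib

section
/- There is no surjective map f : [0,1] → [0,1]² that is Hölder continuous with exponent r > 1/2. Equivalently, a space-filling curve onto the unit square cannot have Hölder exponent exceeding 1/2. -/
/-!
An `r`-Hölder map multiplies Hausdorff dimension by at most `1 / r`. The interval `[0,1]` has
dimension `1` and the unit square, having nonempty interior in the plane, has dimension `2`;
so a Hölder surjection forces `2 ≤ 1 / r`, i.e. `r ≤ 1 / 2`.
-/

open Set
open scoped NNReal ENNReal

theorem holderOnWith_of_dist_le {X Y : Type*} [PseudoMetricSpace X] [PseudoMetricSpace Y]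
    {f : X → Y} {s : Set X} {C : ℝ} {r : ℝ≥0}
    (hf : ∀ x ∈ s, ∀ y ∈ s, dist (f x) (f y) ≤ C * dist x y ^ (r : ℝ)) :
    HolderOnWith C.toNNReal r f s := by
  intro x hx y hy
  rw [edist_dist, edist_dist, ENNReal.ofReal_rpow_of_nonneg dist_nonneg r.coe_nonneg,
    ← ENNReal.ofReal_coe_nnreal, ← ENNReal.ofReal_mul (by positivity)]
  exact ENNReal.ofReal_le_ofReal <| (hf x hx y hy).trans <| by
    gcongr; exact Real.le_coe_toNNReal C

theorem Real.dimH_Icc {a b : ℝ} (hab : a < b) : dimH (Icc a b) = 1 := by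
  rw [Real.dimH_of_nonempty_interior (by simpa using hab), Module.finrank_self, Nat.cast_one]

theorem dimH_euclideanSpace_setOf_forall_mem_Icc {ι : Type*} [Fintype ι] {a b : ℝ}
    (hab : a < b) :
    dimH {p : EuclideanSpace ℝ ι | ∀ i, p i ∈ Icc a b} = Fintype.card ι := by
  set U := {p : EuclideanSpace ℝ ι | ∀ i, p i ∈ Ioo a b}
  have hU : IsOpen U := by
    simp only [U, ofPred_forall]
    exact isOpen_iInter_of_finite fun i => isOpen_Ioo.preimage (EuclideanSpace.proj i).continuous
  have hmid : WithLp.toLp 2 (fun _ => (a + b) / 2) ∈ U :=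
    fun _ => ⟨by simp; linarith, by simp; linarith⟩
  have hint : (interior {p : EuclideanSpace ℝ ι | ∀ i, p i ∈ Icc a b}).Nonempty :=
    ⟨_, interior_mono (fun p (hp : p ∈ U) i => Ioo_subset_Icc_self (hp i))
      (hU.interior_eq.symm ▸ hmid)⟩
  rw [Real.dimH_of_nonempty_interior hint, finrank_euclideanSpace]

/-- no map `f : [0,1] → ℝ²` that is Hölder continuous with
exponent `r > 1/2` can map `[0,1]` onto the unit square: a space-filling
curve cannot have Hölder exponent exceeding `1/2`. -/
theorem no_holder_space_filling_curve (r : ℝ) (hr : 1 / 2 < r)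
    (f : ℝ → EuclideanSpace ℝ (Fin 2)) (C : ℝ)
    (hf : ∀ x ∈ Set.Icc (0 : ℝ) 1, ∀ y ∈ Set.Icc (0 : ℝ) 1,
      ‖f x - f y‖ ≤ C * |x - y| ^ r) :
    f '' Set.Icc (0 : ℝ) 1 ≠
      {p : EuclideanSpace ℝ (Fin 2) | ∀ i, p i ∈ Set.Icc (0 : ℝ) 1} := by
  intro h
  have hr0 : 0 < r := by linarith
  have hH : HolderOnWith C.toNNReal r.toNNReal f (Icc 0 1) := holderOnWith_of_dist_le <| by
    simpa only [dist_eq_norm, Real.norm_eq_abs, Real.coe_toNNReal _ hr0.le] using hf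
  have hdim := hH.dimH_image_le (Real.toNNReal_pos.2 hr0)
  rw [h, dimH_euclideanSpace_setOf_forall_mem_Icc zero_lt_one, Real.dimH_Icc zero_lt_one,
    Fintype.card_fin] at hdim
  have htwo : ENNReal.ofReal 2 ≤ ENNReal.ofReal (1 / r) := by
    rwa [ENNReal.ofReal_div_of_pos hr0, ENNReal.ofReal_one, ENNReal.ofReal_ofNat]
  rw [ENNReal.ofReal_le_ofReal_iff (by positivity), le_div_iff₀ hr0] at htwo
  linarith
end

section
/- If f : [0,1] → ℝ² is Hölder continuous with exponent r > 1/2, then the image f([0,1]) has two-dimensional Lebesgue measure zero. -/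
/-!
An `r`-Hölder map raises Hausdorff dimension by at most the factor `1 / r`, so the image of
`[0,1]` has Hausdorff dimension at most `1 / r < 2`. A set of dimension below `2` is null for
`μH[2]`, and Lebesgue measure on `ℝ²`, being an additive Haar measure, is absolutely continuous
with respect to the Haar measure `μH[2]`.
-/

open MeasureTheory Module
open scoped NNReal ENNReal

theorem HolderOnWith.of_dist_le {X Y : Type*} [PseudoMetricSpace X] [PseudoMetricSpace Y]
    {f : X → Y} {s : Set X} {C : ℝ} {r : ℝ≥0}
    (h : ∀ x ∈ s, ∀ y ∈ s, dist (f x) (f y) ≤ C * dist x y ^ (r : ℝ)) :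
    HolderOnWith C.toNNReal r f s := by
  intro x hx y hy
  rw [edist_dist, edist_dist, ENNReal.ofReal_rpow_of_nonneg dist_nonneg r.coe_nonneg,
    ← ENNReal.ofReal_coe_nnreal, ← ENNReal.ofReal_mul (by positivity)]
  gcongr
  exact (h x hx y hy).trans (by gcongr; exact C.le_coe_toNNReal)

theorem MeasureTheory.Measure.addHaar_eq_zero_of_dimH_lt_finrank {E : Type*}
    [NormedAddCommGroup E] [NormedSpace ℝ E] [FiniteDimensional ℝ E] [MeasurableSpace E]
    [BorelSpace E] (μ : Measure E) [μ.IsAddHaarMeasure] {s : Set E}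
    (hs : dimH s < finrank ℝ E) : μ s = 0 :=
  measure_zero_of_dimH_lt (d := finrank ℝ E)
    (absolutelyContinuous_isAddHaarMeasure μ μH[finrank ℝ E]) hs

theorem HolderOnWith.dimH_image_le_inv {X : Type*} [EMetricSpace X] {f : ℝ → X} {s : Set ℝ}
    {C r : ℝ≥0} (hf : HolderOnWith C r f s) (hr : 0 < r) : dimH (f '' s) ≤ (r : ℝ≥0∞)⁻¹ :=
  calc dimH (f '' s) ≤ dimH s / r := hf.dimH_image_le hr
    _ ≤ dimH (Set.univ : Set ℝ) / r := by gcongr; exact Set.subset_univ s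
    _ = (r : ℝ≥0∞)⁻¹ := by rw [Real.dimH_univ, one_div]

/-- if `f : [0,1] → ℝ²` is Hölder continuous with exponent
`r > 1/2`, then the image `f([0,1])` has two-dimensional Lebesgue measure
zero. -/
theorem holder_image_measure_zero (r : ℝ) (hr : 1 / 2 < r)
    (f : ℝ → EuclideanSpace ℝ (Fin 2)) (C : ℝ)
    (hf : ∀ x ∈ Set.Icc (0 : ℝ) 1, ∀ y ∈ Set.Icc (0 : ℝ) 1,
      ‖f x - f y‖ ≤ C * |x - y| ^ r) :
    volume (f '' Set.Icc (0 : ℝ) 1) = 0 := by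
  lift r to ℝ≥0 using by linarith
  have hholder : HolderOnWith C.toNNReal r f (Set.Icc 0 1) :=
    .of_dist_le fun x hx y hy => by simpa only [dist_eq_norm, Real.norm_eq_abs] using hf x hx y hy
  have hr_half : 2⁻¹ < r := by rw [← NNReal.coe_lt_coe]; simpa [one_div] using hr
  have hdim : dimH (f '' Set.Icc 0 1) < 2 :=
    calc dimH (f '' Set.Icc 0 1) ≤ (r : ℝ≥0∞)⁻¹ := hholder.dimH_image_le_inv (pos_of_gt hr_half)
      _ < 2 := by
        rw [ENNReal.inv_lt_iff_inv_lt, ← ENNReal.coe_ofNat, ← ENNReal.coe_inv two_ne_zero]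
        exact ENNReal.coe_lt_coe.mpr hr_half
  refine volume.addHaar_eq_zero_of_dimH_lt_finrank ?_
  rwa [finrank_euclideanSpace_fin]
end

section
/- Consecutive cells in the Hilbert curve ordering of the 2^k × 2^k grid are orthogonally adjacent: if h : {0,...,4^k − 1} → {0,...,2^k−1}² denotes the k-th iteration Hilbert indexing, then for all m < 4^k − 1, the Manhattan distance between h(m) and h(m+1) equals 1. -/
/-- The `k`-th iteration Hilbert curve indexing of the `2^k × 2^k` grid:
`hilbert k m` is the cell visited at step `m` (for `m < 4^k`).  Iteration
`k+1` is assembled from four reflected/rotated copies of iteration `k`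
placed in the four quadrants in the standard Hilbert order (lower-left,
upper-left, upper-right, lower-right). -/
def hilbert : ℕ → ℕ → ℕ × ℕ
  | 0, _ => (0, 0)
  | k + 1, m =>
    let q := m / 4 ^ k
    let (x, y) := hilbert k (m % 4 ^ k)
    let s := 2 ^ k
    if q = 0 then (y, x)
    else if q = 1 then (x, y + s)
    else if q = 2 then (x + s, y + s)
    else (2 * s - 1 - y, s - 1 - x)

/-- Unfolding lemma for `hilbert (k+1)` with the `let`-match compiled away. -/
lemma hilbert_succ (k m : ℕ) : hilbert (k+1) m =
    if m / 4 ^ k = 0 then ((hilbert k (m % 4 ^ k)).2, (hilbert k (m % 4 ^ k)).1)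
    else if m / 4 ^ k = 1 then ((hilbert k (m % 4 ^ k)).1, (hilbert k (m % 4 ^ k)).2 + 2 ^ k)
    else if m / 4 ^ k = 2 then
      ((hilbert k (m % 4 ^ k)).1 + 2 ^ k, (hilbert k (m % 4 ^ k)).2 + 2 ^ k)
    else (2 * 2 ^ k - 1 - (hilbert k (m % 4 ^ k)).2, 2 ^ k - 1 - (hilbert k (m % 4 ^ k)).1) := by
  cases h : hilbert k (m % 4 ^ k) with
  | mk x y => simp [hilbert, h]

/-- The Hilbert curve stays inside the `2^k × 2^k` grid. -/
lemma hilbert_lt (k m : ℕ) : (hilbert k m).1 < 2 ^ k ∧ (hilbert k m).2 < 2 ^ k := by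
  induction k generalizing m with
  | zero => simp [hilbert]
  | succ k ih =>
    rw [hilbert_succ, pow_succ]
    have h := ih (m % 4 ^ k)
    have hs : 0 < 2 ^ k := pow_pos (by norm_num) k
    split_ifs <;> simp <;> omega

/-- The Hilbert curve starts at the origin. -/
lemma hilbert_zero (k : ℕ) : hilbert k 0 = (0, 0) := by
  induction k with
  | zero => rfl
  | succ k ih =>
    rw [hilbert_succ]
    have h4 : 0 < 4 ^ k := pow_pos (by norm_num) k
    simp [Nat.div_eq_of_lt h4, Nat.mod_eq_of_lt h4, ih]

/-- The Hilbert curve ends at the lower-right corner. -/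
lemma hilbert_last (k : ℕ) : hilbert k (4 ^ k - 1) = (2 ^ k - 1, 0) := by
  induction k with
  | zero => rfl
  | succ k ih =>
    have h4 : 0 < 4 ^ k := pow_pos (by norm_num) k
    have hs : 0 < 2 ^ k := pow_pos (by norm_num) k
    have hm : 4 ^ (k+1) - 1 = 4 ^ k * 3 + (4 ^ k - 1) := by
      rw [pow_succ]; omega
    have hq : (4 ^ k * 3 + (4 ^ k - 1)) / 4 ^ k = 3 := by
      rw [Nat.mul_add_div h4, Nat.div_eq_of_lt (by omega)]
    have hr : (4 ^ k * 3 + (4 ^ k - 1)) % 4 ^ k = 4 ^ k - 1 := by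
      rw [Nat.mul_add_mod, Nat.mod_eq_of_lt (by omega)]
    rw [hilbert_succ, hm, hq, hr, ih]
    simp [pow_succ]
    omega

/-- consecutive cells in the Hilbert ordering are orthogonally
adjacent: the Manhattan distance between `hilbert k m` and `hilbert k (m+1)`
is `1`.  Hence the Hilbert ordering is a Hamiltonian path in the grid
graph. -/
theorem hilbert_consecutive_adjacent (k m : ℕ) (hm : m + 1 < 4 ^ k) :
    (((hilbert k m).1 : ℤ) - ((hilbert k (m + 1)).1 : ℤ)).natAbs +
      (((hilbert k m).2 : ℤ) - ((hilbert k (m + 1)).2 : ℤ)).natAbs = 1 := by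
  induction k generalizing m with
  | zero => omega
  | succ k ih =>
    have h4 : 0 < 4 ^ k := pow_pos (by norm_num) k
    have hs : 0 < 2 ^ k := pow_pos (by norm_num) k
    obtain ⟨q, r, hrlt, hdm⟩ : ∃ q r, r < 4 ^ k ∧ 4 ^ k * q + r = m :=
      ⟨m / 4 ^ k, m % 4 ^ k, Nat.mod_lt _ h4, Nat.div_add_mod m (4 ^ k)⟩
    have hqm : m / 4 ^ k = q := by
      rw [← hdm, Nat.mul_add_div h4, Nat.div_eq_of_lt hrlt]; omega
    have hrm : m % 4 ^ k = r := by
      rw [← hdm, Nat.mul_add_mod, Nat.mod_eq_of_lt hrlt]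
    rw [hilbert_succ, hilbert_succ, hqm, hrm]
    by_cases hb : r + 1 < 4 ^ k
    · -- `m` and `m+1` lie in the same quadrant
      have hq' : (m + 1) / 4 ^ k = q := by
        rw [← hdm, show 4 ^ k * q + r + 1 = 4 ^ k * q + (r + 1) by ring,
          Nat.mul_add_div h4, Nat.div_eq_of_lt hb]; omega
      have hr' : (m + 1) % 4 ^ k = r + 1 := by
        rw [← hdm, show 4 ^ k * q + r + 1 = 4 ^ k * q + (r + 1) by ring,
          Nat.mul_add_mod, Nat.mod_eq_of_lt hb]
      rw [hq', hr']
      have IH := ih r hb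
      have B1 := hilbert_lt k r
      have B2 := hilbert_lt k (r + 1)
      split_ifs <;> simp only <;> omega
    · -- quadrant boundary: `m` ends one quadrant, `m+1` starts the next
      have hrb : r = 4 ^ k - 1 := by omega
      have hmul : 4 ^ k * q + r + 1 = 4 ^ k * (q + 1) := by
        rw [Nat.mul_add, Nat.mul_one]; omega
      have hq' : (m + 1) / 4 ^ k = q + 1 := by
        rw [← hdm, hmul]; exact Nat.mul_div_cancel_left _ h4
      have hr' : (m + 1) % 4 ^ k = 0 := by
        rw [← hdm, hmul]; exact Nat.mul_mod_right _ _
      have hqlt : q + 1 < 4 := by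
        rw [← hq', Nat.div_lt_iff_lt_mul h4]
        calc m + 1 < 4 ^ (k+1) := hm
        _ = 4 * 4 ^ k := by rw [pow_succ, Nat.mul_comm]
      have hq2 : q ≤ 2 := by omega
      rw [hq', hr', hrb, hilbert_last, hilbert_zero]
      interval_cases q <;> simp <;> omega
end
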